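/- arXiv:1605.02273 — 2 statements merged into one kernel-verified Lean document; each statement's English description precedes it below -/
import Mathlib

section
/- Let X_t = e^{At}X_0 + ∫₀^t e^{A(t-u)} e dB_u be the solution of the linear SDE dX = AX dt + e dB with X_0 independent of B, A = [[0,1],[-α,-γ]], e = (0,σ)ᵀ. Then, writing X_{nh} = (x_{nh}, y_{nh}), the first coordinate satisfies x_{(n+2)h} = trace(e^{Ah}) x_{(n+1)h} - e^{-γh} x_{nh} - a₂₂ W_{n+1,1} + W_{n+2,1} + a₁₂ W_{n+1,2}, where a_ij = (e^{Ah})_{ij}, W_{n+1,i} = σ∫₀^h (e^{A(h-u)})_{i2} dB(nh+u), provided a₁₂ ≠ 0. -/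
/-!
For a `2 × 2` matrix `A` one has `A + adj A = (tr A) • 1`, and `A ↦ (adj A)ᵀ` is a continuous
ring endomorphism, so `adj` commutes with the exponential. Hence
`det (exp A) • 1 = exp A * adj (exp A) = exp A * exp (adj A) = exp ((tr A) • 1)`,
i.e. `det (e^{Ah}) = e^{tr (Ah)} = e^{-γh}`. Eliminating `y` from the one-step recursion is then
Cayley–Hamilton: `x_{n+2} - tr(a) x_{n+1} + det(a) x_n` is a combination of the noise terms.
-/

open NormedSpace

namespace Matrix

variable {R : Type*} [CommRing R]

theorem add_adjugate_fin_two (A : Matrix (Fin 2) (Fin 2) R) :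
    A + adjugate A = scalar (Fin 2) A.trace := by
  ext i j
  fin_cases i <;> fin_cases j <;> simp [adjugate_fin_two, trace_fin_two, add_comm]

def adjugateTransposeRingHom : Matrix (Fin 2) (Fin 2) R →+* Matrix (Fin 2) (Fin 2) R where
  toFun A := (adjugate A)ᵀ
  map_one' := by rw [adjugate_one, transpose_one]
  map_mul' A B := by rw [adjugate_mul_distrib, transpose_mul]
  map_zero' := by rw [adjugate_zero, transpose_zero]
  map_add' A B := by
    ext i j
    fin_cases i <;> fin_cases j <;> simp [adjugate_fin_two] <;> ring

section Exp

attribute [local instance] Matrix.linftyOpNormedRing Matrix.linftyOpNormedAlgebra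

variable {𝕜 : Type*} [RCLike 𝕜]

theorem adjugate_exp_fin_two (A : Matrix (Fin 2) (Fin 2) 𝕜) :
    adjugate (exp A) = exp (adjugate A) := by
  have hcont : Continuous (adjugateTransposeRingHom (R := 𝕜)) :=
    continuous_id.matrix_adjugate.matrix_transpose
  rw [← transpose_inj, ← exp_transpose]
  exact map_exp _ hcont A

theorem det_exp_fin_two (A : Matrix (Fin 2) (Fin 2) 𝕜) : (exp A).det = exp A.trace := by
  have hcomm : Commute A (adjugate A) := (mul_adjugate A).trans (adjugate_mul A).symm
  have hscalar : scalar (Fin 2) (exp A.trace) = exp (scalar (Fin 2) A.trace) :=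
    map_exp _ (continuous_pi fun _ => continuous_id).matrix_diagonal _
  have h : (exp A).det • (1 : Matrix (Fin 2) (Fin 2) 𝕜) = scalar (Fin 2) (exp A.trace) := by
    rw [← mul_adjugate, adjugate_exp_fin_two, ← exp_add_of_commute _ _ hcomm,
      add_adjugate_fin_two, hscalar]
  simpa using congrFun (congrFun h 0) 0

end Exp

end Matrix

theorem fst_add_two_eq_of_linear_recursion {R : Type*} [CommRing R]
    (a : Matrix (Fin 2) (Fin 2) R) (x y : ℕ → R) (W : ℕ → Fin 2 → R)
    (hx : ∀ n, x (n + 1) = a 0 0 * x n + a 0 1 * y n + W (n + 1) 0)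
    (hy : ∀ n, y (n + 1) = a 1 0 * x n + a 1 1 * y n + W (n + 1) 1) (n : ℕ) :
    x (n + 2) = a.trace * x (n + 1) - a.det * x n
      - a 1 1 * W (n + 1) 0 + W (n + 2) 0 + a 0 1 * W (n + 1) 1 := by
  rw [Matrix.trace_fin_two, Matrix.det_fin_two]
  linear_combination hx (n + 1) - a 1 1 * hx n + a 0 1 * hy n

theorem stmt_11_general {Ω : Type*} (α γ h : ℝ)
    (A : Matrix (Fin 2) (Fin 2) ℝ) (hA : A = !![0, 1; -α, -γ])
    (a : Matrix (Fin 2) (Fin 2) ℝ) (ha : a = NormedSpace.exp (h • A))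
    (x y : ℕ → Ω → ℝ) (W : ℕ → Fin 2 → Ω → ℝ)
    (hx : ∀ n ω, x (n + 1) ω = a 0 0 * x n ω + a 0 1 * y n ω + W (n + 1) 0 ω)
    (hy : ∀ n ω, y (n + 1) ω = a 1 0 * x n ω + a 1 1 * y n ω + W (n + 1) 1 ω) :
    ∀ n ω, x (n + 2) ω
      = a.trace * x (n + 1) ω - Real.exp (-γ * h) * x n ω
        - a 1 1 * W (n + 1) 0 ω + W (n + 2) 0 ω + a 0 1 * W (n + 1) 1 ω := by
  intro n ω
  have hdet : a.det = Real.exp (-γ * h) := by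
    rw [ha, Matrix.det_exp_fin_two, ← Real.exp_eq_exp_ℝ, hA]
    simp [Matrix.trace_fin_two, mul_comm]
  rw [← hdet]
  exact fst_add_two_eq_of_linear_recursion a (x · ω) (y · ω) (W · · ω)
    (fun n => hx n ω) (fun n => hy n ω) n

/-- Elimination of the unobserved velocity from the exact discrete-time recursion for the
linear Langevin system.  The solution `X_t = e^{At}X_0 + ∫₀^t e^{A(t-u)} e dB_u` satisfies,
at discrete times, the one-step recursion
`x_{(n+1)h} = a₁₁ x_{nh} + a₁₂ y_{nh} + W_{n+1,1}`,
`y_{(n+1)h} = a₂₁ x_{nh} + a₂₂ y_{nh} + W_{n+1,2}`, with `a_{ij} = (e^{Ah})_{ij}` and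
`W_{n+1,i} = σ∫₀^h (e^{A(h-u)})_{i2} dB(nh+u)`; here these recursions are taken as
hypotheses.  Provided `a₁₂ ≠ 0`, the observed coordinate satisfies
`x_{(n+2)h} = trace(e^{Ah}) x_{(n+1)h} - e^{-γh} x_{nh}
  - a₂₂ W_{n+1,1} + W_{n+2,1} + a₁₂ W_{n+1,2}`. -/
theorem stmt_11 {Ω : Type*} (α γ σ h : ℝ) (hh : 0 < h)
    (A : Matrix (Fin 2) (Fin 2) ℝ) (hA : A = !![0, 1; -α, -γ])
    (a : Matrix (Fin 2) (Fin 2) ℝ) (ha : a = NormedSpace.exp (h • A))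
    (ha12 : a 0 1 ≠ 0)
    (x y : ℕ → Ω → ℝ) (W : ℕ → Fin 2 → Ω → ℝ)
    (hx : ∀ n ω, x (n + 1) ω = a 0 0 * x n ω + a 0 1 * y n ω + W (n + 1) 0 ω)
    (hy : ∀ n ω, y (n + 1) ω = a 1 0 * x n ω + a 1 1 * y n ω + W (n + 1) 1 ω) :
    ∀ n ω, x (n + 2) ω
      = a.trace * x (n + 1) ω - Real.exp (-γ * h) * x n ω
        - a 1 1 * W (n + 1) 0 ω + W (n + 2) 0 ω + a 0 1 * W (n + 1) 1 ω :=
  stmt_11_general α γ h A hA a ha x y W hx hy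
end

section
/- Suppose γ² - 4α < 0 and let Δ = γ² - 4α. For the stationary linear Langevin process with observation spacing h, the autocovariances γ_n = (σ²/(2γα))(cos(√(-Δ) nh/2) + (γ/√(-Δ)) sin(√(-Δ) nh/2)) e^{-γnh/2} satisfy the AR(2) recurrence γ_{n+2} = a₁γ_{n+1} + a₂γ_n with a₁ = 2e^{-γh/2}cos(√(-Δ)h/2) and a₂ = -e^{-γh}. -/
/-- Underdamped autocovariances: with `Δ = γ² - 4α < 0`,
`γ_n = (σ²/(2γα)) (cos(√(-Δ) nh/2) + (γ/√(-Δ)) sin(√(-Δ) nh/2)) e^{-γnh/2}` satisfies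
`γ_{n+2} = a₁ γ_{n+1} + a₂ γ_n` with `a₁ = 2e^{-γh/2} cos(√(-Δ)h/2)`, `a₂ = -e^{-γh}`. -/
theorem stmt_12 (α γ σ h : ℝ) (hα : 0 < α) (hγ : 0 < γ) (hσ : 0 < σ) (hh : 0 < h)
    (Δ : ℝ) (hΔdef : Δ = γ ^ 2 - 4 * α) (hΔ : Δ < 0)
    (g : ℕ → ℝ)
    (hg : ∀ n : ℕ, g n = σ ^ 2 / (2 * γ * α)
      * (Real.cos (Real.sqrt (-Δ) * n * h / 2)
          + γ / Real.sqrt (-Δ) * Real.sin (Real.sqrt (-Δ) * n * h / 2))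
      * Real.exp (-γ * n * h / 2))
    (a₁ a₂ : ℝ)
    (ha₁ : a₁ = 2 * Real.exp (-γ * h / 2) * Real.cos (Real.sqrt (-Δ) * h / 2))
    (ha₂ : a₂ = -Real.exp (-γ * h)) :
    ∀ n : ℕ, g (n + 2) = a₁ * g (n + 1) + a₂ * g n := by
  intro n
  set s := Real.sqrt (-Δ) with hs
  rw [hg, hg, hg, ha₁, ha₂]
  push_cast
  have e2 : s * (n + 2) * h / 2 = (s * n * h / 2 + s * h / 2) + s * h / 2 := by ring
  have e1 : s * (n + 1) * h / 2 = s * n * h / 2 + s * h / 2 := by ring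
  have f2 : -γ * (n + 2) * h / 2 = (-γ * n * h / 2 + -γ * h / 2) + -γ * h / 2 := by ring
  have f1 : -γ * (n + 1) * h / 2 = -γ * n * h / 2 + -γ * h / 2 := by ring
  have f0 : Real.exp (-γ * h) = Real.exp (-γ * h / 2) * Real.exp (-γ * h / 2) := by
    rw [← Real.exp_add]; ring_nf
  rw [e2, e1, f2, f1, f0]
  simp only [Real.cos_add, Real.sin_add, Real.exp_add]
  have key := Real.sin_sq_add_cos_sq (s * h / 2)
  set K := σ ^ 2 / (2 * γ * α)
  set c := γ / s
  set Cx := Real.cos (s * n * h / 2)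
  set Sx := Real.sin (s * n * h / 2)
  set Cp := Real.cos (s * h / 2)
  set Sp := Real.sin (s * h / 2)
  set e := Real.exp (-γ * n * h / 2)
  set E := Real.exp (-γ * h / 2)
  linear_combination (-(K * e * E ^ 2 * (Cx + c * Sx))) * key
end
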